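/- Let A be a complex normed algebra, X a Banach A-bimodule, σ, τ : A → A maps, and d : A → X a (σ-τ)-derivation, i.e. d(ab) = d(a)σ(b) + τ(a)d(b) for all a,b ∈ A. If τ is multiplicative (τ(ab) = τ(a)τ(b) for all a,b ∈ A), then for all a,b,c ∈ A one has d(c)·(σ(ab) − σ(a)σ(b)) = 0 in X. -/

import Mathlib

/-- A Banach bimodule over a (not necessarily unital) complex normed algebra `A`:
a complex Banach space `X` with continuous bilinear left and right actions of `A`
which are associative and commute with each other (`a (x b) = (a x) b`). -/
structure BanachBimodule (A : Type*) [NonUnitalNormedRing A] [NormedSpace ℂ A]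
    (X : Type*) [NormedAddCommGroup X] [NormedSpace ℂ X] [CompleteSpace X] where
  lsmul : A →L[ℂ] X →L[ℂ] X
  rsmul : A →L[ℂ] X →L[ℂ] X
  lsmul_mul : ∀ (a b : A) (x : X), lsmul (a * b) x = lsmul a (lsmul b x)
  rsmul_mul : ∀ (a b : A) (x : X), rsmul (a * b) x = rsmul b (rsmul a x)
  middle : ∀ (a b : A) (x : X), lsmul a (rsmul b x) = rsmul b (lsmul a x)

/-! Expanding `d(c(ab)) = d((ca)b)` with the twisted Leibniz rule, the terms involving `d a` and
`d b` agree on both sides once `τ` is multiplicative, leaving `d(c)σ(ab) = d(c)σ(a)σ(b)`. -/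

namespace BanachBimodule

variable {A : Type*} [NonUnitalNormedRing A] [NormedSpace ℂ A]
  {X : Type*} [NormedAddCommGroup X] [NormedSpace ℂ X] [CompleteSpace X]

/-- A `(σ-τ)`-derivation in the paper's terminology. -/
def IsTwistedDerivation (M : BanachBimodule A X) (σ τ : A → A) (d : A → X) : Prop :=
  ∀ a b : A, d (a * b) = M.rsmul (σ b) (d a) + M.lsmul (τ a) (d b)

namespace IsTwistedDerivation

variable {M : BanachBimodule A X} {σ τ : A → A} {d : A → X}

theorem apply_mul_mul (hd : M.IsTwistedDerivation σ τ d) (a b c : A) :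
    d (c * (a * b)) = M.rsmul (σ (a * b)) (d c) +
      (M.lsmul (τ c) (M.rsmul (σ b) (d a)) + M.lsmul (τ c) (M.lsmul (τ a) (d b))) := by
  rw [hd c (a * b), hd a b, map_add]

theorem apply_mul_mul_of_map_mul (hd : M.IsTwistedDerivation σ τ d)
    (hτ : ∀ a b : A, τ (a * b) = τ a * τ b) (a b c : A) :
    d (c * a * b) = M.rsmul (σ a * σ b) (d c) +
      (M.lsmul (τ c) (M.rsmul (σ b) (d a)) + M.lsmul (τ c) (M.lsmul (τ a) (d b))) := by
  rw [hd (c * a) b, hd c a, hτ c a, map_add, M.rsmul_mul, ← M.middle, M.lsmul_mul, add_assoc]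

end IsTwistedDerivation

end BanachBimodule

theorem derivation_annihilates_sigma_defect_general
    {A : Type*} [NonUnitalNormedRing A] [NormedSpace ℂ A]
    {X : Type*} [NormedAddCommGroup X] [NormedSpace ℂ X] [CompleteSpace X]
    (M : BanachBimodule A X) (σ τ : A → A) (d : A → X)
    (hd : ∀ a b : A, d (a * b) = M.rsmul (σ b) (d a) + M.lsmul (τ a) (d b))
    (hτ : ∀ a b : A, τ (a * b) = τ a * τ b) :
    ∀ a b c : A, M.rsmul (σ (a * b) - σ a * σ b) (d c) = 0 := by
  intro a b c
  have hder : M.IsTwistedDerivation σ τ d := hd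
  have hassoc := congrArg d (mul_assoc c a b)
  rw [hder.apply_mul_mul_of_map_mul hτ, hder.apply_mul_mul] at hassoc
  rw [map_sub, sub_apply, add_right_cancel hassoc, sub_self]

/-- The key computation in Theorem 2.1(i) of the paper: if `d` is a
`(σ-τ)`-derivation and `τ` is multiplicative, then
`d(c)·(σ(ab) − σ(a)σ(b)) = 0` for all `a, b, c`. -/
theorem derivation_annihilates_sigma_defect
    {A : Type*} [NonUnitalNormedRing A] [NormedSpace ℂ A]
    [IsScalarTower ℂ A A] [SMulCommClass ℂ A A]
    {X : Type*} [NormedAddCommGroup X] [NormedSpace ℂ X] [CompleteSpace X]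
    (M : BanachBimodule A X) (σ τ : A → A) (d : A → X)
    (hd : ∀ a b : A, d (a * b) = M.rsmul (σ b) (d a) + M.lsmul (τ a) (d b))
    (hτ : ∀ a b : A, τ (a * b) = τ a * τ b) :
    ∀ a b c : A, M.rsmul (σ (a * b) - σ a * σ b) (d c) = 0 :=
  derivation_annihilates_sigma_defect_general M σ τ d hd hτ
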